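/- Let r ≥ 1 be an integer, A_r = (a_1,…,a_r) ∈ ℤ_{>0}^r, N_r ∈ ℤ_{≥0}^r, x > 0 a real number, θ ∈ ℝ, and s ∈ ℂ with Re(s) > r. Then ∑_{M_r=0_r}^{N_r} e^{iθ(A_r·M_r)} (A_r·M_r + x)^{−s} = (1/2^r) ∑_{S ⊆ {1,…,r}} (−1)^{|S|} e^{iθ(A_S·(N_S+1_{|S|}))} ζ_E(s, A_S·(N_S+1_{|S|}) + x, iθ; A_r). -/

import Mathlib

open scoped BigOperators

/-- The generalized Euler-zeta function
`ζ_E(s, y, iθ; A_r) := 2^r ∑_{M_r ∈ ℤ_{≥0}^r} e^{iθ(A_r·M_r)} (A_r·M_r + y)^{−s}`. -/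
noncomputable def zetaE {r : ℕ} (a : Fin r → ℕ) (s : ℂ) (y : ℝ) (θ : ℝ) : ℂ :=
  2 ^ r *
    ∑' M : Fin r → ℕ,
      Complex.exp ((θ : ℂ) * Complex.I * ((∑ i, a i * M i : ℕ) : ℂ)) *
        (((∑ i, a i * M i : ℕ) : ℂ) + (y : ℂ)) ^ (-s)

set_option maxHeartbeats 1000000

lemma aux_shift_summable (p c : ℝ) (hp : 1 < p) (hc : 0 < c) :
    Summable (fun n : ℕ => ((n : ℝ) + c) ^ (-p)) := by
  have h0 : Summable (fun n : ℕ => (n : ℝ) ^ (-p)) :=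
    Real.summable_nat_rpow.mpr (by linarith)
  have h1 : Summable (fun n : ℕ => ((n : ℝ) + 1) ^ (-p)) := by
    have := (summable_nat_add_iff 1).mpr h0
    simpa [Nat.cast_add] using this
  set δ := min c 1 with hδ
  have hδ0 : 0 < δ := lt_min hc one_pos
  refine Summable.of_nonneg_of_le (fun n => Real.rpow_nonneg (by positivity) _)
    (fun n => ?_) (h1.mul_left (δ ^ (-p)))
  have hle : δ * ((n : ℝ) + 1) ≤ (n : ℝ) + c := by
    have h2 : δ ≤ 1 := min_le_right _ _
    have h3 : δ ≤ c := min_le_left _ _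
    nlinarith [Nat.cast_nonneg (α := ℝ) n]
  have := Real.rpow_le_rpow_of_nonpos (show (0:ℝ) < δ * ((n:ℝ)+1) by positivity) hle (show -p ≤ 0 by linarith)
  rwa [Real.mul_rpow hδ0.le (by positivity)] at this

lemma aux_pi_prod_summable (r : ℕ) (g : ℕ → ℝ) (hg : ∀ n, 0 ≤ g n) (hsum : Summable g) :
    Summable (fun M : Fin r → ℕ => ∏ i, g (M i)) := by
  induction r with
  | zero =>
    simp only [Finset.univ_eq_empty, Finset.prod_empty]
    exact summable_of_finite_support (Set.toFinite _)
  | succ r ih =>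
    have h2 : Summable (fun p : ℕ × (Fin r → ℕ) => g p.1 * ∏ i, g (p.2 i)) :=
      Summable.mul_of_nonneg (ι := ℕ) (ι' := Fin r → ℕ) (f := g)
        (g := fun M : Fin r → ℕ => ∏ i, g (M i)) hsum ih hg
        (fun M => Finset.prod_nonneg fun i _ => hg _)
    rw [← Equiv.summable_iff (Fin.consEquiv (fun _ : Fin (r + 1) => ℕ))]
    have he : ((fun M : Fin (r + 1) → ℕ => ∏ i, g (M i)) ∘ (Fin.consEquiv (fun _ : Fin (r + 1) => ℕ)))
        = fun p : ℕ × (Fin r → ℕ) => g p.1 * ∏ i, g (p.2 i) := by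
      funext q
      simp only [Function.comp_apply, Fin.consEquiv_apply, Fin.prod_univ_succ,
        Fin.cons_zero, Fin.cons_succ]
    rw [he]
    exact h2

lemma aux_main_summable (r : ℕ) (hr : 1 ≤ r) (a : Fin r → ℕ) (ha : ∀ p, 0 < a p)
    (x : ℝ) (hx : 0 < x) (σ : ℝ) (hσ : (r : ℝ) < σ) :
    Summable (fun M : Fin r → ℕ => (((∑ i, a i * M i : ℕ) : ℝ) + x) ^ (-σ)) := by
  have hr0 : (0 : ℝ) < r := by exact_mod_cast hr
  have hσ0 : 0 < σ := lt_trans hr0 hσ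
  set p := σ / r with hp
  have hp1 : 1 < p := (one_lt_div hr0).mpr hσ
  have hbase : Summable (fun n : ℕ => ((n : ℝ) + x / r) ^ (-p)) :=
    aux_shift_summable p (x / r) hp1 (by positivity)
  have hprod := aux_pi_prod_summable r (fun n => ((n : ℝ) + x / r) ^ (-p))
    (fun n => Real.rpow_nonneg (by positivity) _) hbase
  refine Summable.of_nonneg_of_le (fun M => Real.rpow_nonneg (by positivity) _)
    (fun M => ?_) hprod
  have hz : ∀ i : Fin r, (0 : ℝ) < (M i : ℝ) + x / r := fun i => by positivity
  set W : ℝ := ((∑ i, a i * M i : ℕ) : ℝ) + x with hW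
  have hWpos : 0 < W := by positivity
  have hgm : (∏ i, ((M i : ℝ) + x / r) ^ ((1 : ℝ) / r)) ≤ W := by
    have h1 := Real.geom_mean_le_arith_mean_weighted Finset.univ
      (fun _ : Fin r => (1 : ℝ) / r) (fun i => (M i : ℝ) + x / r)
      (fun i _ => by positivity)
      (by simp [Finset.sum_const, Finset.card_univ]; field_simp)
      (fun i _ => (hz i).le)
    refine le_trans h1 ?_
    have hcast : W = (∑ i : Fin r, (a i : ℝ) * (M i : ℝ)) + x := by
      rw [hW]; push_cast; ring
    rw [hcast]
    simp only [mul_add]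
    rw [Finset.sum_add_distrib, Finset.sum_const, Finset.card_univ, Fintype.card_fin,
      nsmul_eq_mul]
    have t1 : ∑ i : Fin r, (1 : ℝ) / r * (M i : ℝ) ≤ ∑ i : Fin r, (a i : ℝ) * (M i : ℝ) := by
      apply Finset.sum_le_sum
      intro i _
      apply mul_le_mul_of_nonneg_right _ (Nat.cast_nonneg _)
      have : (1 : ℝ) ≤ (a i : ℝ) := by exact_mod_cast ha i
      have h1r : (1 : ℝ) / r ≤ 1 := by
        rw [div_le_one hr0]; exact_mod_cast hr
      linarith
    have t2 : (r : ℝ) * ((1 : ℝ) / r * (x / r)) ≤ x := by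
      rw [← mul_assoc, mul_one_div, div_self (ne_of_gt hr0), one_mul]
      exact div_le_self hx.le (by exact_mod_cast hr)
    linarith
  have hprodpos : (0 : ℝ) < ∏ i, ((M i : ℝ) + x / r) ^ ((1 : ℝ) / r) :=
    Finset.prod_pos fun i _ => Real.rpow_pos_of_pos (hz i) _
  have h2 := Real.rpow_le_rpow_of_nonpos hprodpos hgm (show -σ ≤ 0 by linarith)
  calc W ^ (-σ) ≤ (∏ i, ((M i : ℝ) + x / r) ^ ((1 : ℝ) / r)) ^ (-σ) := h2
    _ = ∏ i, ((M i : ℝ) + x / r) ^ (-p) := by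
        rw [← Real.finset_prod_rpow _ _ (fun i _ => Real.rpow_nonneg (hz i).le _) (-σ)]
        apply Finset.prod_congr rfl
        intro i _
        rw [← Real.rpow_mul (hz i).le]
        congr 1
        rw [hp]
        field_simp

lemma aux_norm_eq (x : ℝ) (hx : 0 < x) (θ : ℝ) (s : ℂ) (n : ℕ) :
    ‖Complex.exp ((θ : ℂ) * Complex.I * (n : ℂ)) * (((n : ℂ) + (x : ℂ)) ^ (-s))‖
      = ((n : ℝ) + x) ^ (-s.re) := by
  rw [norm_mul]
  have h1 : ‖Complex.exp ((θ : ℂ) * Complex.I * (n : ℂ))‖ = 1 := by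
    rw [Complex.norm_exp]
    simp
  have h2 : ((n : ℂ) + (x : ℂ)) = ((((n : ℝ) + x) : ℝ) : ℂ) := by push_cast; ring
  rw [h1, one_mul, h2,
    Complex.norm_cpow_eq_rpow_re_of_pos (by positivity)]
  simp

lemma aux_f_summable (r : ℕ) (hr : 1 ≤ r) (a : Fin r → ℕ) (ha : ∀ p, 0 < a p)
    (x : ℝ) (hx : 0 < x) (θ : ℝ) (s : ℂ) (hs : (r : ℝ) < s.re) :
    Summable (fun M : Fin r → ℕ =>
      Complex.exp ((θ : ℂ) * Complex.I * ((∑ i, a i * M i : ℕ) : ℂ)) *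
        (((∑ i, a i * M i : ℕ) : ℂ) + (x : ℂ)) ^ (-s)) := by
  apply Summable.of_norm
  simp only [aux_norm_eq x hx θ s]
  exact aux_main_summable r hr a ha x hx s.re hs

noncomputable def auxF (r : ℕ) (a : Fin r → ℕ) (x θ : ℝ) (s : ℂ) (M : Fin r → ℕ) : ℂ :=
  Complex.exp ((θ : ℂ) * Complex.I * ((∑ i, a i * M i : ℕ) : ℂ)) *
    (((∑ i, a i * M i : ℕ) : ℂ) + (x : ℂ)) ^ (-s)

noncomputable def auxG (r : ℕ) (a N : Fin r → ℕ) (x θ : ℝ) (s : ℂ) (S : Finset (Fin r))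
    (K : Fin r → ℕ) : ℂ :=
  if ∀ i ∈ S, N i + 1 ≤ K i then auxF r a x θ s K else 0

lemma auxF_summable (r : ℕ) (hr : 1 ≤ r) (a : Fin r → ℕ) (ha : ∀ p, 0 < a p)
    (x : ℝ) (hx : 0 < x) (θ : ℝ) (s : ℂ) (hs : (r : ℝ) < s.re) :
    Summable (auxF r a x θ s) :=
  aux_f_summable r hr a ha x hx θ s hs

lemma auxG_summable (r : ℕ) (hr : 1 ≤ r) (a : Fin r → ℕ) (ha : ∀ p, 0 < a p)
    (N : Fin r → ℕ) (x : ℝ) (hx : 0 < x) (θ : ℝ) (s : ℂ) (hs : (r : ℝ) < s.re)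
    (S : Finset (Fin r)) : Summable (auxG r a N x θ s S) := by
  apply Summable.of_norm
  refine Summable.of_nonneg_of_le (fun K => norm_nonneg _) (fun K => ?_)
    (auxF_summable r hr a ha x hx θ s hs).norm
  rw [auxG]
  split_ifs with h
  · exact le_refl _
  · simp

lemma aux_term (r : ℕ) (hr : 1 ≤ r) (a : Fin r → ℕ) (ha : ∀ p, 0 < a p)
    (N : Fin r → ℕ) (x : ℝ) (hx : 0 < x) (θ : ℝ) (s : ℂ) (hs : (r : ℝ) < s.re)
    (S : Finset (Fin r)) :
    Complex.exp ((θ : ℂ) * Complex.I * ((∑ i ∈ S, a i * (N i + 1) : ℕ) : ℂ)) *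
        zetaE a s (((∑ i ∈ S, a i * (N i + 1) : ℕ) : ℝ) + x) θ
      = 2 ^ r * ∑' K, auxG r a N x θ s S K := by
  classical
  set b : ℕ := ∑ i ∈ S, a i * (N i + 1) with hb
  set v : Fin r → ℕ := fun i => if i ∈ S then N i + 1 else 0 with hv
  have hvb : ∑ i, a i * v i = b := by
    rw [hb, hv]
    simp only [mul_ite, mul_zero]
    rw [Finset.sum_ite_mem, Finset.univ_inter]
  have hshift : ∀ M : Fin r → ℕ, (∑ i, a i * (M i + v i)) = (∑ i, a i * M i) + b := by
    intro M
    rw [← hvb, ← Finset.sum_add_distrib]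
    exact Finset.sum_congr rfl fun i _ => by ring
  -- rewrite zetaE summand
  rw [zetaE, ← mul_assoc, mul_comm _ ((2 : ℂ) ^ r), mul_assoc, ← tsum_mul_left]
  congr 1
  have hstep : ∀ M : Fin r → ℕ,
      Complex.exp ((θ : ℂ) * Complex.I * ((b : ℕ) : ℂ)) *
        (Complex.exp ((θ : ℂ) * Complex.I * ((∑ i, a i * M i : ℕ) : ℂ)) *
          (((∑ i, a i * M i : ℕ) : ℂ) + (((b : ℝ) + x : ℝ) : ℂ)) ^ (-s))
      = auxF r a x θ s (fun i => M i + v i) := by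
    intro M
    simp only [auxF, hshift M]
    rw [← mul_assoc, ← Complex.exp_add]
    have h1 : (θ : ℂ) * Complex.I * ((b : ℕ) : ℂ) +
        (θ : ℂ) * Complex.I * ((∑ i, a i * M i : ℕ) : ℂ)
        = (θ : ℂ) * Complex.I * (((∑ i, a i * M i) + b : ℕ) : ℂ) := by
      push_cast; ring
    rw [h1]
    congr 2
    push_cast; ring
  rw [tsum_congr hstep]
  -- change of variables
  have hφinj : Function.Injective (fun (M : Fin r → ℕ) (i : Fin r) => M i + v i) := by
    intro M1 M2 h
    funext i
    have h2 := congrFun h i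
    simp only at h2
    omega
  have hsupp : Function.support (auxG r a N x θ s S) ⊆
      Set.range (fun (M : Fin r → ℕ) (i : Fin r) => M i + v i) := by
    intro K hK
    have hcond : ∀ i ∈ S, N i + 1 ≤ K i := by
      by_contra h
      exact hK (by rw [auxG, if_neg h])
    refine ⟨fun i => K i - v i, ?_⟩
    funext i
    have hvle : v i ≤ K i := by
      by_cases hiS : i ∈ S
      · have := hcond i hiS
        simp only [hv, if_pos hiS]
        omega
      · simp [hv, hiS]
    show K i - v i + v i = K i
    omega
  have hgeq : ∀ M : Fin r → ℕ,
      auxF r a x θ s (fun i => M i + v i) = auxG r a N x θ s S (fun i => M i + v i) := by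
    intro M
    rw [auxG, if_pos]
    intro i hi
    simp only [hv, if_pos hi]
    omega
  rw [tsum_congr hgeq]
  exact Function.Injective.tsum_eq hφinj hsupp

lemma aux_inner (r : ℕ) (a N : Fin r → ℕ) (x θ : ℝ) (s : ℂ) (K : Fin r → ℕ) :
    ∑ S : Finset (Fin r), (-1 : ℂ) ^ S.card * auxG r a N x θ s S K
      = if ∀ i, K i ≤ N i then auxF r a x θ s K else 0 := by
  classical
  set T : Finset (Fin r) := Finset.univ.filter (fun i => N i + 1 ≤ K i) with hT
  have hmem : ∀ S : Finset (Fin r), (∀ i ∈ S, N i + 1 ≤ K i) ↔ S ⊆ T := by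
    intro S
    constructor
    · intro h i hi
      rw [hT, Finset.mem_filter]
      exact ⟨Finset.mem_univ i, h i hi⟩
    · intro h i hi
      have := h hi
      rw [hT, Finset.mem_filter] at this
      exact this.2
  have hsum : ∑ S : Finset (Fin r), (-1 : ℂ) ^ S.card * auxG r a N x θ s S K
      = ∑ S ∈ T.powerset, (-1 : ℂ) ^ S.card * auxF r a x θ s K := by
    rw [← Finset.sum_subset (Finset.subset_univ T.powerset)]
    · apply Finset.sum_congr rfl
      intro S hS
      rw [Finset.mem_powerset] at hS
      rw [auxG, if_pos ((hmem S).mpr hS)]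
    · intro S _ hS
      rw [Finset.mem_powerset] at hS
      rw [auxG, if_neg, mul_zero]
      intro h
      exact hS ((hmem S).mp h)
  rw [hsum, ← Finset.sum_mul]
  have hpow : (∑ S ∈ T.powerset, (-1 : ℂ) ^ S.card)
      = if T = ∅ then 1 else 0 := by
    have h := Finset.sum_powerset_neg_one_pow_card (x := T)
    calc (∑ S ∈ T.powerset, (-1 : ℂ) ^ S.card)
        = ((∑ S ∈ T.powerset, (-1 : ℤ) ^ S.card : ℤ) : ℂ) := by push_cast; rfl
      _ = if T = ∅ then 1 else 0 := by rw [h]; split_ifs <;> simp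
  rw [hpow]
  have hTiff : T = ∅ ↔ ∀ i, K i ≤ N i := by
    rw [hT, Finset.filter_eq_empty_iff]
    constructor
    · intro h i
      have := h (Finset.mem_univ i)
      omega
    · intro h i _
      have := h i
      omega
  split_ifs with h1 h2 h2
  · rw [one_mul]
  · exact absurd (hTiff.mp h1) h2
  · exact absurd (hTiff.mpr h2) h1
  · rw [zero_mul]

lemma aux_box (r : ℕ) (a N : Fin r → ℕ) (x θ : ℝ) (s : ℂ) :
    (∑' K : Fin r → ℕ, if ∀ i, K i ≤ N i then auxF r a x θ s K else 0)
      = ∑ M : (i : Fin r) → Fin (N i + 1), auxF r a x θ s (fun i => (M i : ℕ)) := by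
  classical
  have h0 : ∀ K ∉ Fintype.piFinset (fun i => Finset.range (N i + 1)),
      (if ∀ i, K i ≤ N i then auxF r a x θ s K else 0) = 0 := by
    intro K hK
    rw [if_neg]
    intro h
    apply hK
    rw [Fintype.mem_piFinset]
    intro i
    rw [Finset.mem_range]
    exact Nat.lt_succ_of_le (h i)
  rw [tsum_eq_sum h0]
  have h1 : ∀ K ∈ Fintype.piFinset (fun i => Finset.range (N i + 1)),
      (if ∀ i, K i ≤ N i then auxF r a x θ s K else 0) = auxF r a x θ s K := by
    intro K hK
    rw [Fintype.mem_piFinset] at hK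
    rw [if_pos]
    intro i
    have := hK i
    rw [Finset.mem_range] at this
    omega
  rw [Finset.sum_congr rfl h1]
  refine Finset.sum_bij'
    (i := fun K hK => fun i => (⟨K i, by
      rw [Fintype.mem_piFinset] at hK
      simpa [Finset.mem_range] using hK i⟩ : Fin (N i + 1)))
    (j := fun M _ => fun i => (M i : ℕ)) ?_ ?_ ?_ ?_ ?_
  · intro K hK
    exact Finset.mem_univ _
  · intro M _
    rw [Fintype.mem_piFinset]
    intro i
    rw [Finset.mem_range]
    exact (M i).isLt
  · intro K hK
    rfl
  · intro M _
    rfl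
  · intro K hK
    rfl

/-- Inclusion–exclusion identity: for `Re(s) > r`,
`∑_{M_r=0_r}^{N_r} e^{iθ(A_r·M_r)} (A_r·M_r + x)^{−s}
  = 2^{-r} ∑_{S ⊆ {1,…,r}} (−1)^{|S|} e^{iθ(A_S·(N_S+1_{|S|}))} ζ_E(s, A_S·(N_S+1_{|S|})+x, iθ; A_r)`. -/
theorem statement12 (r : ℕ) (hr : 1 ≤ r) (a : Fin r → ℕ) (ha : ∀ p, 0 < a p)
    (N : Fin r → ℕ) (x : ℝ) (hx : 0 < x) (θ : ℝ) (s : ℂ) (hs : (r : ℝ) < s.re) :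
    (∑ M : (i : Fin r) → Fin (N i + 1),
        Complex.exp ((θ : ℂ) * Complex.I * ((∑ i, a i * (M i : ℕ) : ℕ) : ℂ)) *
          (((∑ i, a i * (M i : ℕ) : ℕ) : ℂ) + (x : ℂ)) ^ (-s)) =
      (1 / 2 ^ r : ℂ) *
        ∑ S : Finset (Fin r),
          (-1 : ℂ) ^ S.card *
            Complex.exp ((θ : ℂ) * Complex.I * ((∑ i ∈ S, a i * (N i + 1) : ℕ) : ℂ)) *
            zetaE a s (((∑ i ∈ S, a i * (N i + 1) : ℕ) : ℝ) + x) θ := by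
  classical
  have h2r : (2 : ℂ) ^ r ≠ 0 := pow_ne_zero _ two_ne_zero
  have hsumm : ∀ S : Finset (Fin r),
      Summable (fun K => (-1 : ℂ) ^ S.card * auxG r a N x θ s S K) :=
    fun S => (auxG_summable r hr a ha N x hx θ s hs S).mul_left _
  have key : (∑ S : Finset (Fin r),
      (-1 : ℂ) ^ S.card *
        Complex.exp ((θ : ℂ) * Complex.I * ((∑ i ∈ S, a i * (N i + 1) : ℕ) : ℂ)) *
        zetaE a s (((∑ i ∈ S, a i * (N i + 1) : ℕ) : ℝ) + x) θ)
      = 2 ^ r * ∑ M : (i : Fin r) → Fin (N i + 1), auxF r a x θ s (fun i => (M i : ℕ)) := by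
    have step1 : ∀ S : Finset (Fin r), (-1 : ℂ) ^ S.card *
        Complex.exp ((θ : ℂ) * Complex.I * ((∑ i ∈ S, a i * (N i + 1) : ℕ) : ℂ)) *
        zetaE a s (((∑ i ∈ S, a i * (N i + 1) : ℕ) : ℝ) + x) θ
        = 2 ^ r * ∑' K, (-1 : ℂ) ^ S.card * auxG r a N x θ s S K := by
      intro S
      rw [mul_assoc, aux_term r hr a ha N x hx θ s hs S, tsum_mul_left]
      ring
    rw [Finset.sum_congr rfl (fun S _ => step1 S), ← Finset.mul_sum]
    congr 1
    rw [← Summable.tsum_finsetSum (fun S _ => hsumm S)]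
    have hinner : ∀ K : Fin r → ℕ,
        (∑ S : Finset (Fin r), (-1 : ℂ) ^ S.card * auxG r a N x θ s S K)
        = if ∀ i, K i ≤ N i then auxF r a x θ s K else 0 :=
      aux_inner r a N x θ s
    rw [tsum_congr hinner, aux_box r a N x θ s]
  rw [key, ← mul_assoc, one_div, inv_mul_cancel₀ h2r, one_mul]
  rfl
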